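/- Let G = (V, E) be a quasi-acyclic 2-path-bounded oriented graph without loops, multiple edges and triangles. Then for any two distinct edges e, e' ∈ E there exists a 3-vanishing commutative diagram D = (G, l) with values in a ring R (viewed as a multiplicative monoid) such that l(e)l(e') ≠ 0. -/

import Mathlib

/-- An oriented graph: finite nonempty sets of vertices and edges with
origin and tail maps. -/
structure OrientedGraph where
  V : Type
  E : Type
  [fintypeV : Fintype V]
  [fintypeE : Fintype E]
  [nonemptyV : Nonempty V]
  [nonemptyE : Nonempty E]
  o : E → V
  t : E → V

attribute [instance] OrientedGraph.fintypeV OrientedGraph.fintypeE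
  OrientedGraph.nonemptyV OrientedGraph.nonemptyE

namespace OrientedGraph

variable (G : OrientedGraph)

/-- `G.IsPath p u v` : the edge sequence `p` is a path from `u` to `v`
(consecutive edges are composable; paths of length 0 at any vertex are allowed). -/
def IsPath (p : List G.E) (u v : G.V) : Prop :=
  List.Chain' (fun e f => G.t e = G.o f) p ∧
  ((p = [] ∧ u = v) ∨
    ∃ h : p ≠ [], u = G.o (p.head h) ∧ v = G.t (p.getLast h))

/-- The label of an edge sequence: the product of the labels of its edges
(the empty sequence maps to `1`). -/
def labelProd {M : Type} [Monoid M] (l : G.E → M) (s : List G.E) : M :=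
  (s.map l).prod

/-- The diagram `(G, l)` is commutative: any two paths with the same origin and
the same tail have equal labels. -/
def IsCommutative {M : Type} [Monoid M] (l : G.E → M) : Prop :=
  ∀ (u v : G.V) (p₁ p₂ : List G.E),
    G.IsPath p₁ u v → G.IsPath p₂ u v → G.labelProd l p₁ = G.labelProd l p₂

/-- A complete system of relations for `G`: for every monoid `M` and every
labeling `l : E → M`, the diagram `(G, l)` is commutative iff all relations hold. -/
def IsComplete (R : Finset (List G.E × List G.E)) : Prop :=
  ∀ (M : Type) [Monoid M], ∀ l : G.E → M,
    G.IsCommutative l ↔ ∀ r ∈ R, G.labelProd l r.1 = G.labelProd l r.2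

/-- A minimal complete system of relations: no proper subset is complete. -/
def IsMinimalComplete (R : Finset (List G.E × List G.E)) : Prop :=
  G.IsComplete R ∧ ∀ R' : Finset (List G.E × List G.E), R' ⊂ R → ¬ G.IsComplete R'

/-- The commutativity rank `η(G)`: the minimal cardinality of a complete
system of relations for `G`. -/
noncomputable def eta : ℕ :=
  sInf {n : ℕ | ∃ R : Finset (List G.E × List G.E), G.IsComplete R ∧ R.card = n}

/-- `S'` is obtained from `S` by one multiplication. -/
def MulStep (S S' : Set (List G.E)) : Prop :=
  ∃ s ∈ S, ∃ s' ∈ S, S' = S ∪ {s ++ s'}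

/-- `G.mCost S S'` : the minimal number of multiplications needed to obtain `S'`
from `S` (`⊤` if impossible). -/
noncomputable def mCost (S S' : Set (List G.E)) : ℕ∞ :=
  sInf {k : ℕ∞ | ∃ n : ℕ, k = n ∧ ∃ f : ℕ → Set (List G.E),
    f 0 = S ∧ f n = S' ∧ ∀ i < n, G.MulStep (f i) (f (i + 1))}

/-- `S_R`: the set of all edge sequences appearing in the relations of `R`. -/
def relSet (R : Finset (List G.E × List G.E)) : Set (List G.E) :=
  {s | ∃ r ∈ R, s = r.1 ∨ s = r.2}

/-- `ℰ`: the empty sequence together with all one-edge sequences. -/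
def baseSet : Set (List G.E) :=
  {s | s = [] ∨ ∃ e : G.E, s = [e]}

/-- `m(R)`: the minimal number of multiplications needed to build all sequences
appearing in `R`, starting from `ℰ`. -/
noncomputable def mRel (R : Finset (List G.E × List G.E)) : ℕ∞ :=
  sInf {k : ℕ∞ | ∃ S : Set (List G.E), G.relSet R ⊆ S ∧ k = G.mCost G.baseSet S}

/-- The multiplication rank `ν(G)`. -/
noncomputable def nu : ℕ∞ :=
  sInf {k : ℕ∞ | ∃ R : Finset (List G.E × List G.E), G.IsComplete R ∧ k = G.mRel R}

/-- A 4-tuple of edges `(a, b, c, d)` forms a rhomboid. -/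
def IsRhomboid (r : G.E × G.E × G.E × G.E) : Prop :=
  G.o r.1 = G.o r.2.2.1 ∧ G.t r.2.1 = G.t r.2.2.2 ∧
  G.t r.1 = G.o r.2.1 ∧ G.t r.2.2.1 = G.o r.2.2.2 ∧
  G.o r.1 ≠ G.t r.1 ∧ G.o r.1 ≠ G.o r.2.2.2 ∧ G.o r.1 ≠ G.t r.2.2.2 ∧
  G.t r.1 ≠ G.o r.2.2.2 ∧ G.t r.1 ≠ G.t r.2.2.2 ∧ G.o r.2.2.2 ≠ G.t r.2.2.2

/-- Two rhomboids `(a, b, c, d)` and `(a', b', c', d')` are disjoint. -/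
def RhDisjoint (r r' : G.E × G.E × G.E × G.E) : Prop :=
  (r.1 ≠ r'.1 ∨ r.2.1 ≠ r'.2.1) ∧
  (r.1 ≠ r'.2.2.1 ∨ r.2.1 ≠ r'.2.2.2) ∧
  (r.2.2.1 ≠ r'.2.2.1 ∨ r.2.2.2 ≠ r'.2.2.2) ∧
  (r.2.2.1 ≠ r'.1 ∨ r.2.2.2 ≠ r'.2.1)

/-- `𝔯𝔥(G)`: the maximal cardinality of a family of pairwise disjoint rhomboids in `G`. -/
noncomputable def rhNum : ℕ :=
  sSup {n : ℕ | ∃ F : Finset (G.E × G.E × G.E × G.E),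
    (∀ r ∈ F, G.IsRhomboid r) ∧
    (∀ r ∈ F, ∀ r' ∈ F, r ≠ r' → G.RhDisjoint r r') ∧ F.card = n}

/-- `𝔏(G)`: the number of loops of `G`. -/
noncomputable def loopCount : ℕ :=
  Nat.card {e : G.E // G.o e = G.t e}

/-- `G` is quasi-acyclic: no directed cycle visiting two or more distinct vertices. -/
def QuasiAcyclic : Prop :=
  ∀ u v : G.V, u ≠ v →
    ∀ p q : List G.E, G.IsPath p u v → G.IsPath q v u → False

/-- `G` is 2-path-bounded: every oriented path avoiding loop edges has length at most 2. -/
def TwoPathBounded : Prop :=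
  ∀ (p : List G.E) (u v : G.V), G.IsPath p u v →
    (∀ e ∈ p, G.o e ≠ G.t e) → p.length ≤ 2

/-- `G` has a pair of multiple edges. -/
def HasMultipleEdges : Prop :=
  ∃ e e' : G.E, e ≠ e' ∧ G.t e = G.t e' ∧ G.o e = G.o e' ∧ G.t e ≠ G.o e

/-- `G` has a triangle. -/
def HasTriangle : Prop :=
  ∃ a b c : G.E, G.o a = G.o b ∧ G.t b = G.o c ∧ G.t c = G.t a ∧
    G.o a ≠ G.t a ∧ G.o b ≠ G.t b ∧ G.o c ≠ G.t c

/-- `G` has no loops. -/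
def NoLoops : Prop := ∀ e : G.E, G.o e ≠ G.t e

/-- Every edge occurring on either side of the relation `r` is a loop. -/
def AllLoops (r : List G.E × List G.E) : Prop :=
  (∀ e ∈ r.1, G.o e = G.t e) ∧ (∀ e ∈ r.2, G.o e = G.t e)

/-- Both sides of the relation `r` contain at least one non-loop edge. -/
def BothSidesNonLoop (r : List G.E × List G.E) : Prop :=
  (∃ e ∈ r.1, G.o e ≠ G.t e) ∧ (∃ e ∈ r.2, G.o e ≠ G.t e)

end OrientedGraph

/-- The triploid `T(n₁, n₂, n₃, n₀, e)`. -/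
def Triploid (n₁ n₂ n₃ n₀ e : ℕ) (hn₁ : 0 < n₁) (he : n₂ * (n₁ + n₃) ≤ e)
    (he₀ : 0 < e) : OrientedGraph where
  V := Fin n₀ ⊕ Fin n₁ ⊕ Fin n₂ ⊕ Fin n₃
  E := (Fin n₁ × Fin n₂) ⊕ (Fin n₂ × Fin n₃) ⊕ Fin (e - n₂ * (n₁ + n₃))
  nonemptyV := ⟨Sum.inr (Sum.inl ⟨0, hn₁⟩)⟩
  nonemptyE := by
    by_cases h : n₂ * (n₁ + n₃) < e
    · exact ⟨Sum.inr (Sum.inr ⟨0, by omega⟩)⟩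
    · have h2 : 0 < n₂ := by
        rcases Nat.eq_zero_or_pos n₂ with h0 | h0
        · exfalso; subst h0; simp at h; omega
        · exact h0
      exact ⟨Sum.inl (⟨0, hn₁⟩, ⟨0, h2⟩)⟩
  o := Sum.elim (fun p => Sum.inr (Sum.inl p.1))
        (Sum.elim (fun p => Sum.inr (Sum.inr (Sum.inl p.1)))
          (fun _ => Sum.inr (Sum.inl ⟨0, hn₁⟩)))
  t := Sum.elim (fun p => Sum.inr (Sum.inr (Sum.inl p.2)))
        (Sum.elim (fun p => Sum.inr (Sum.inr (Sum.inr p.2)))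
          (fun _ => Sum.inr (Sum.inl ⟨0, hn₁⟩)))

/-! Every edge is labelled by the same matrix `N` with `N ^ 3 = 0 ≠ N ^ 2` (`upperShift3`).
A labelling constant on edges is commutative as soon as any two paths with common endpoints have
the same length, and the hypotheses force this: paths have length at most 2, a nonempty closed path would contradict
quasi-acyclicity, and a single edge parallel to a path of length 2 closes a triangle. -/

namespace OrientedGraph

variable {G : OrientedGraph}

theorem isPath_iff {p : List G.E} {u v : G.V} :
    G.IsPath p u v ↔ p.IsChain (fun e f => G.t e = G.o f) ∧
      ((p = [] ∧ u = v) ∨ ∃ h : p ≠ [], u = G.o (p.head h) ∧ v = G.t (p.getLast h)) :=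
  Iff.rfl

theorem isPath_nil_iff {u v : G.V} : G.IsPath [] u v ↔ u = v := by
  simp [isPath_iff]

theorem isPath_cons_iff {f : G.E} {p : List G.E} {u v : G.V} :
    G.IsPath (f :: p) u v ↔ u = G.o f ∧ G.IsPath p (G.t f) v := by
  cases p with
  | nil => simp [isPath_iff, eq_comm]
  | cons g p => simp [isPath_iff, List.isChain_cons_cons, and_left_comm, and_assoc]

theorem QuasiAcyclic.not_isPath_self (hqa : G.QuasiAcyclic) (hnl : G.NoLoops) {p : List G.E}
    (hp : p ≠ []) (u : G.V) : ¬ G.IsPath p u u := by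
  obtain ⟨f, p, rfl⟩ := List.exists_cons_of_ne_nil hp
  intro h
  obtain ⟨rfl, hrest⟩ := isPath_cons_iff.mp h
  exact hqa _ _ (hnl f) [f] p (by simp [isPath_cons_iff, isPath_nil_iff]) hrest

theorem length_le_of_isPath (hnl : G.NoLoops) (hqa : G.QuasiAcyclic) (hpb : G.TwoPathBounded)
    (htr : ¬ G.HasTriangle) {p q : List G.E} {u v : G.V} (hp : G.IsPath p u v)
    (hq : G.IsPath q u v) : p.length ≤ q.length := by
  by_contra! hlt
  have hp2 : p.length ≤ 2 := hpb p u v hp fun f _ => hnl f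
  rcases q with _ | ⟨c, _ | ⟨d, q⟩⟩
  · obtain rfl := isPath_nil_iff.mp hq
    exact hqa.not_isPath_self hnl (List.ne_nil_of_length_pos hlt) u hp
  · obtain ⟨a, b, rfl⟩ : ∃ a b, p = [a, b] := by
      rcases p with _ | ⟨a, _ | ⟨b, _ | ⟨_, _⟩⟩⟩ <;> simp at hlt hp2 ⊢
    simp only [isPath_cons_iff, isPath_nil_iff] at hp hq
    obtain ⟨rfl, hab, rfl⟩ := hp
    obtain ⟨hac, hbc⟩ := hq
    exact htr ⟨c, a, b, hac.symm, hab, hbc.symm, hnl c, hnl a, hnl b⟩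
  · simp only [List.length_cons] at hlt
    omega

theorem length_eq_of_isPath (hnl : G.NoLoops) (hqa : G.QuasiAcyclic) (hpb : G.TwoPathBounded)
    (htr : ¬ G.HasTriangle) {p q : List G.E} {u v : G.V} (hp : G.IsPath p u v)
    (hq : G.IsPath q u v) : p.length = q.length :=
  (length_le_of_isPath hnl hqa hpb htr hp hq).antisymm (length_le_of_isPath hnl hqa hpb htr hq hp)

theorem labelProd_const {M : Type} [Monoid M] (x : M) (s : List G.E) :
    G.labelProd (fun _ => x) s = x ^ s.length := by
  simp [labelProd]

theorem isCommutative_const {M : Type} [Monoid M] (x : M)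
    (hlen : ∀ (u v : G.V) (p q : List G.E), G.IsPath p u v → G.IsPath q u v →
      p.length = q.length) :
    G.IsCommutative fun _ => x := by
  intro u v p q hp hq
  rw [labelProd_const, labelProd_const, hlen u v p q hp hq]

end OrientedGraph

def upperShift3 : Matrix (Fin 3) (Fin 3) ℤ := !![0, 1, 0; 0, 0, 1; 0, 0, 0]

theorem upperShift3_pow_three : upperShift3 ^ 3 = 0 := by
  decide

theorem upperShift3_sq_ne_zero : upperShift3 ^ 2 ≠ 0 := by
  decide

theorem exists_three_vanishing_pair_general (G : OrientedGraph) (hnl : G.NoLoops) (hqa : G.QuasiAcyclic)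
    (hpb : G.TwoPathBounded) (htr : ¬ G.HasTriangle)
    (e e' : G.E) :
    ∃ (R : Type) (_ : Ring R) (l : G.E → R),
      G.IsCommutative l ∧
      (∀ e₁ e₂ e₃ : G.E, l e₁ * l e₂ * l e₃ = 0) ∧
      l e * l e' ≠ 0 := by
  refine ⟨Matrix (Fin 3) (Fin 3) ℤ, inferInstance, fun _ => upperShift3, ?_, fun _ _ _ => ?_, ?_⟩
  · exact G.isCommutative_const _ fun _ _ _ _ => G.length_eq_of_isPath hnl hqa hpb htr
  · simpa only [pow_succ, pow_zero, one_mul] using upperShift3_pow_three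
  · simpa only [pow_succ, pow_zero, one_mul] using upperShift3_sq_ne_zero

/-- Theorem: for a quasi-acyclic, 2-path-bounded graph without loops, multiple edges
and triangles, and any distinct edges `e, e'`, there is a 3-vanishing commutative
diagram with values in a ring such that `l(e)·l(e') ≠ 0`. -/
theorem exists_three_vanishing_pair (G : OrientedGraph) (hnl : G.NoLoops) (hqa : G.QuasiAcyclic)
    (hpb : G.TwoPathBounded) (hme : ¬ G.HasMultipleEdges) (htr : ¬ G.HasTriangle)
    (e e' : G.E) (hee : e ≠ e') :
    ∃ (R : Type) (_ : Ring R) (l : G.E → R),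
      G.IsCommutative l ∧
      (∀ e₁ e₂ e₃ : G.E, l e₁ * l e₂ * l e₃ = 0) ∧
      l e * l e' ≠ 0 :=
  exists_three_vanishing_pair_general G hnl hqa hpb htr e e'
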